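/- arXiv:0903.4585 — 3 statements merged into one kernel-verified Lean document; each statement's English description precedes it below -/
import Mathlib

section
/- Suppose ρ : π → U(n) is a faithful irreducible representation of a non-abelian finite nilpotent group π. Let S be the center of the unitary group U(n) and let G be the subgroup of U(n) generated by ρ(π) and S. Then the group extension S → G → G/S does not split; that is, there is no group homomorphism s : G/S → G with q ∘ s = id, where q : G → G/S is the quotient homomorphism. -/
/-!
The quotient `G/S` is a quotient of `π`, hence nilpotent, and it is nontrivial because `π` is
non-abelian and `ρ` faithful; so `G/S` has a nontrivial central element `z`. A splitting `s`
sends `z` to an element commuting with `s(G/S)`, and since `G = S · s(G/S)` with `S` central,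
`s z` is central in `G`. By Schur's lemma `s z` is then a scalar matrix, i.e. lies in `S`, which
forces `z = q (s z) = 1`.
-/

open Matrix

instance center_subgroupOf_normal {M : Type*} [Group M] (G : Subgroup M) :
    ((Subgroup.center M).subgroupOf G).Normal :=
  Subgroup.Normal.subgroupOf inferInstance G

open Subgroup QuotientGroup

section Splitting

variable {G : Type*} [Group G] {N : Subgroup G} [N.Normal]

theorem section_apply_mem_center (hN : N ≤ center G) {s : G ⧸ N →* G}
    (hs : (mk' N).comp s = .id _) {z : G ⧸ N} (hz : z ∈ center (G ⧸ N)) : s z ∈ center G := by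
  refine mem_center_iff.mpr fun g => ?_
  set t := s (g : G ⧸ N)
  -- `g = (g t⁻¹) t`, where `g t⁻¹ ∈ N` is central and `t` commutes with `s z`
  have hgt : g * t⁻¹ ∈ N := by
    rw [← QuotientGroup.eq_one_iff, QuotientGroup.mk_mul, QuotientGroup.mk_inv, ← mk'_apply N t,
      ← MonoidHom.comp_apply, hs, MonoidHom.id_apply, mul_inv_cancel]
  have htz : Commute t (s z) := by
    simpa only [Commute, SemiconjBy, map_mul] using congrArg s (mem_center_iff.mp hz g)
  have hgtz : Commute (g * t⁻¹) (s z) := (mem_center_iff.mp (hN hgt) (s z)).symm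
  simpa only [inv_mul_cancel_right] using (hgtz.mul_left htz).eq

theorem center_quotient_eq_bot_of_section (hN : N ≤ center G) (hc : center G ≤ N)
    {s : G ⧸ N →* G} (hs : (mk' N).comp s = .id _) : center (G ⧸ N) = ⊥ := by
  refine eq_bot_iff.mpr fun z hz => ?_
  rw [mem_bot, ← MonoidHom.id_apply (G ⧸ N) z, ← hs, MonoidHom.comp_apply, mk'_apply,
    QuotientGroup.eq_one_iff]
  exact hc (section_apply_mem_center hN hs hz)

end Splitting

theorem center_subgroupOf_le_center {M : Type*} [Group M] (G : Subgroup M) :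
    (center M).subgroupOf G ≤ center G :=
  fun _ hg => mem_center_iff.mpr fun h => Subtype.ext (mem_center_iff.mp hg h)

theorem surjective_mk'_comp_codRestrict {π M : Type*} [Group π] [Group M] (f : π →* M)
    {H G : Subgroup M} [H.Normal] (hfG : ∀ x, f x ∈ G) (hG : G ≤ closure (Set.range f ∪ H)) :
    Function.Surjective ((mk' (H.subgroupOf G)).comp (f.codRestrict G hfG)) := by
  intro q
  obtain ⟨g, rfl⟩ := mk'_surjective _ q
  have hg : (g : M) ∈ f.range ⊔ H := by
    simpa only [Subgroup.closure_union, ← MonoidHom.coe_range, closure_eq] using hG g.2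
  obtain ⟨_, ⟨x, rfl⟩, h, hh, hxh⟩ := mem_sup_of_normal_right.mp hg
  refine ⟨x, (QuotientGroup.eq).mpr (mem_subgroupOf.mpr ?_)⟩
  simpa [← hxh] using hh

theorem subgroupOf_center_ne_top {π M : Type*} [Group π] [Group M] {f : π →* M}
    (hf : Function.Injective f) (hπ : ∃ a b : π, a * b ≠ b * a) {G : Subgroup M}
    (hfG : ∀ x, f x ∈ G) : (center M).subgroupOf G ≠ ⊤ := by
  intro htop
  obtain ⟨a, b, hab⟩ := hπ
  have hfa : f a ∈ center M := mem_subgroupOf.mp (htop ▸ mem_top (⟨f a, hfG a⟩ : G))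
  exact hab (hf (by rw [map_mul, map_mul, mem_center_iff.mp hfa (f b)]))

def Matrix.IsIrreducibleFamily {ι m K : Type*} [Field K] [Fintype m] (M : ι → Matrix m m K) :
    Prop :=
  ∀ W : Submodule K (m → K), (∀ i, ∀ v ∈ W, M i *ᵥ v ∈ W) → W = ⊥ ∨ W = ⊤

theorem Matrix.IsIrreducibleFamily.exists_eq_smul_one {ι m K : Type*} [Field K] [IsAlgClosed K]
    [Fintype m] [DecidableEq m] {M : ι → Matrix m m K} (hM : IsIrreducibleFamily M)
    {A : Matrix m m K} (hA : ∀ i, M i * A = A * M i) : ∃ c : K, A = c • 1 := by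
  cases isEmpty_or_nonempty m
  · exact ⟨0, Subsingleton.elim _ _⟩
  obtain ⟨μ, hμ⟩ := Module.End.exists_eigenvalue A.mulVecLin
  have hinv : ∀ i, ∀ v ∈ Module.End.eigenspace A.mulVecLin μ, M i *ᵥ v ∈
      Module.End.eigenspace A.mulVecLin μ := by
    intro i v hv
    rw [Module.End.mem_eigenspace_iff, mulVecLin_apply] at hv ⊢
    rw [mulVec_mulVec, ← hA i, ← mulVec_mulVec, hv, mulVec_smul]
  have htop := (hM _ hinv).resolve_left hμ
  refine ⟨μ, mulVec_injective (funext fun v => ?_)⟩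
  have hv := Module.End.mem_eigenspace_iff.mp (htop ▸ Submodule.mem_top : v ∈ _)
  rw [mulVecLin_apply] at hv
  rw [hv, smul_mulVec, one_mulVec]

theorem Matrix.mem_center_unitaryGroup_of_eq_smul_one {m K : Type*} [Fintype m] [DecidableEq m]
    [CommRing K] [StarRing K] {u : unitaryGroup m K} {c : K} (hu : (u : Matrix m m K) = c • 1) :
    u ∈ center (unitaryGroup m K) :=
  mem_center_iff.mpr fun g => Subtype.ext (by simp [hu])

theorem center_le_subgroupOf_center_of_isIrreducibleFamily {π m K : Type*} [Group π] [Fintype m]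
    [DecidableEq m] [Field K] [IsAlgClosed K] [StarRing K] {ρ : π →* unitaryGroup m K}
    (hρ : IsIrreducibleFamily fun x => (ρ x : Matrix m m K)) {G : Subgroup (unitaryGroup m K)}
    (hρG : ∀ x, ρ x ∈ G) : center G ≤ (center (unitaryGroup m K)).subgroupOf G := by
  intro g hg
  have hcomm (x : π) : (ρ x : Matrix m m K) * g = g * ρ x :=
    congrArg (fun y : G => ((y : unitaryGroup m K) : Matrix m m K))
      (mem_center_iff.mp hg ⟨ρ x, hρG x⟩)
  obtain ⟨c, hc⟩ := hρ.exists_eq_smul_one hcomm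
  exact mem_subgroupOf.mpr (mem_center_unitaryGroup_of_eq_smul_one hc)

theorem extension_by_center_does_not_split_general (n : ℕ) (π : Type*) [Group π]
    (hπ : ∃ a b : π, a * b ≠ b * a)
    (hnil : Group.IsNilpotent π)
    (ρ : π →* Matrix.unitaryGroup (Fin n) ℂ)
    (hfaithful : Function.Injective ρ)
    (hirr : ∀ W : Submodule ℂ (Fin n → ℂ),
      (∀ g : π, ∀ v ∈ W, Matrix.mulVec ((ρ g : Matrix.unitaryGroup (Fin n) ℂ) :
        Matrix (Fin n) (Fin n) ℂ) v ∈ W) → W = ⊥ ∨ W = ⊤)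
    (G : Subgroup (Matrix.unitaryGroup (Fin n) ℂ))
    (hG : G = Subgroup.closure (Set.range ρ ∪
      (Subgroup.center (Matrix.unitaryGroup (Fin n) ℂ) : Set (Matrix.unitaryGroup (Fin n) ℂ)))) :
    ¬ ∃ s : (G ⧸ (Subgroup.center (Matrix.unitaryGroup (Fin n) ℂ)).subgroupOf G) →* G,
      (QuotientGroup.mk' ((Subgroup.center (Matrix.unitaryGroup (Fin n) ℂ)).subgroupOf G)).comp s
        = MonoidHom.id _ := by
  rintro ⟨s, hs⟩
  have hρG (x : π) : ρ x ∈ G := hG ▸ subset_closure (Or.inl ⟨x, rfl⟩)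
  have : Group.IsNilpotent (G ⧸ (center (unitaryGroup (Fin n) ℂ)).subgroupOf G) :=
    Group.nilpotent_of_surjective _ (surjective_mk'_comp_codRestrict ρ hρG hG.le)
  have : Nontrivial (G ⧸ (center (unitaryGroup (Fin n) ℂ)).subgroupOf G) :=
    QuotientGroup.nontrivial_iff.mpr (subgroupOf_center_ne_top hfaithful hπ hρG)
  exact Group.IsNilpotent.center_ne_bot _ <| center_quotient_eq_bot_of_section
    (center_subgroupOf_le_center G)
    (center_le_subgroupOf_center_of_isIrreducibleFamily hirr hρG) hs

/-- If `ρ : π → U(n)` is a faithful irreducible representation of a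
non-abelian finite nilpotent group `π`, `S` is the center of `U(n)` and `G` is the subgroup
of `U(n)` generated by `ρ(π)` and `S`, then the extension `S → G → G/S` does not split:
there is no homomorphism `s : G/S → G` with `q ∘ s = id`. -/
theorem extension_by_center_does_not_split (n : ℕ) (π : Type*) [Group π] [Finite π]
    (hπ : ∃ a b : π, a * b ≠ b * a)
    (hnil : Group.IsNilpotent π)
    (ρ : π →* Matrix.unitaryGroup (Fin n) ℂ)
    (hfaithful : Function.Injective ρ)
    (hirr : ∀ W : Submodule ℂ (Fin n → ℂ),
      (∀ g : π, ∀ v ∈ W, Matrix.mulVec ((ρ g : Matrix.unitaryGroup (Fin n) ℂ) :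
        Matrix (Fin n) (Fin n) ℂ) v ∈ W) → W = ⊥ ∨ W = ⊤)
    (G : Subgroup (Matrix.unitaryGroup (Fin n) ℂ))
    (hG : G = Subgroup.closure (Set.range ρ ∪
      (Subgroup.center (Matrix.unitaryGroup (Fin n) ℂ) : Set (Matrix.unitaryGroup (Fin n) ℂ)))) :
    ¬ ∃ s : (G ⧸ (Subgroup.center (Matrix.unitaryGroup (Fin n) ℂ)).subgroupOf G) →* G,
      (QuotientGroup.mk' ((Subgroup.center (Matrix.unitaryGroup (Fin n) ℂ)).subgroupOf G)).comp s
        = MonoidHom.id _ :=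
  extension_by_center_does_not_split_general n π hπ hnil ρ hfaithful hirr G hG
end

section
/- Let π be a finite non-abelian nilpotent group, let A be a commutative group, and let Q be any group. Then there is no injective group homomorphism f : π → A × Q such that the composite pr_Q ∘ f : π → Q (with pr_Q the projection onto the second factor) is surjective and has kernel equal to the center Z(π) of π. -/
/-!
`Q ≅ π ⧸ Z(π)` is nilpotent and, as `π` is non-abelian, nontrivial, so it has a nontrivial
centre. An element of `π` mapping into `Z(Q)` has an image in `A × Q` that commutes with the
whole image of `π`, so by injectivity it lies in `Z(π)`, the kernel; hence `Z(Q)` is trivial.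
-/

open Subgroup

theorem comap_center_le_center_of_injective_prod {G A Q : Type*} [Group G] [CommGroup A]
    [Group Q] {f : G →* A × Q} (hf : Function.Injective f) :
    (center Q).comap ((MonoidHom.snd A Q).comp f) ≤ center G := by
  intro x hx
  rw [mem_center_iff]
  intro y
  apply hf
  rw [map_mul, map_mul]
  ext
  · exact mul_comm _ _
  · exact mem_center_iff.mp hx (f y).2

theorem no_embedding_into_product_general (π A Q : Type*) [Group π]
    [CommGroup A] [Group Q]
    (hπ : ∃ a b : π, a * b ≠ b * a)
    (hnil : Group.IsNilpotent π) :
    ¬ ∃ f : π →* A × Q, Function.Injective f ∧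
      Function.Surjective ((MonoidHom.snd A Q).comp f) ∧
      ((MonoidHom.snd A Q).comp f).ker = Subgroup.center π := by
  rintro ⟨f, hinj, hsurj, hker⟩
  set g := (MonoidHom.snd A Q).comp f
  have hQ : Nontrivial Q := by
    by_contra hQ
    rw [not_nontrivial_iff_subsingleton] at hQ
    obtain ⟨a, b, hab⟩ := hπ
    have ha : a ∈ center π := hker ▸ g.mem_ker.mpr (Subsingleton.elim _ _)
    exact hab (mem_center_iff.mp ha b).symm
  have : Group.IsNilpotent Q := Group.nilpotent_of_surjective g hsurj
  refine Group.IsNilpotent.center_ne_bot Q (le_bot_iff.mp ?_)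
  refine (comap_le_comap_of_surjective hsurj).mp ?_
  rw [MonoidHom.comap_bot, hker]
  exact comap_center_le_center_of_injective_prod hinj

/-- Let `π` be a finite non-abelian nilpotent group, `A` a commutative
group, `Q` any group.  There is no injective homomorphism `f : π → A × Q` such that the
composite `pr_Q ∘ f : π → Q` is surjective with kernel the center `Z(π)`. -/
theorem no_embedding_into_product (π A Q : Type*) [Group π] [Finite π]
    [CommGroup A] [Group Q]
    (hπ : ∃ a b : π, a * b ≠ b * a)
    (hnil : Group.IsNilpotent π) :
    ¬ ∃ f : π →* A × Q, Function.Injective f ∧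
      Function.Surjective ((MonoidHom.snd A Q).comp f) ∧
      ((MonoidHom.snd A Q).comp f).ker = Subgroup.center π :=
  no_embedding_into_product_general π A Q hπ hnil
end

section
/- For every integer n ≥ 4 and every prime p, the symmetric group Σ_n on n letters is p-nilpotent (i.e. has a normal p-complement) if and only if p > n. -/
open scoped Nat


/-- A group `γ` is *p-nilpotent* (has a normal `p`-complement) if there is a normal
subgroup `N` which is a complement to a Sylow `p`-subgroup `P`:
`N ⊓ P = ⊥` and `N ⊔ P = ⊤` (so `γ = N ⋊ P`). -/
def IsPNilpotent (p : ℕ) (γ : Type*) [Group γ] : Prop :=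
  ∃ N : Subgroup γ, N.Normal ∧ ∃ P : Sylow p γ,
    N ⊓ (P : Subgroup γ) = ⊥ ∧ N ⊔ (P : Subgroup γ) = ⊤

/-- For every `n ≥ 4` and every prime `p`, the symmetric group `Σₙ`
is `p`-nilpotent if and only if `p > n`. -/
theorem symmGroup_pNilpotent_iff (n : ℕ) (hn : 4 ≤ n) (p : ℕ) (hp : p.Prime) :
    IsPNilpotent p (Equiv.Perm (Fin n)) ↔ p > n := by
  have : Fact p.Prime := ⟨hp⟩
  have hcard : Nat.card (Equiv.Perm (Fin n)) = n ! := by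
    simp [Nat.card_eq_fintype_card, Fintype.card_perm]
  constructor
  · rintro ⟨N, hN, P, hinf, hsup⟩
    by_contra hle
    push_neg at hle
    -- p ≤ n, so p ∣ n!
    have hdvd : p ∣ n ! := (Nat.Prime.dvd_factorial hp).mpr hle
    have hPcard : Nat.card (P : Subgroup (Equiv.Perm (Fin n)))
        = p ^ (Nat.card (Equiv.Perm (Fin n))).factorization p :=
      P.card_eq_multiplicity
    -- the quotient map restricted to P is surjective
    have hsurj : Function.Surjective
        ((QuotientGroup.mk' N).comp (P : Subgroup (Equiv.Perm (Fin n))).subtype) := by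
      intro q
      obtain ⟨g, rfl⟩ := QuotientGroup.mk'_surjective N q
      have hg : g ∈ (↑((P : Subgroup (Equiv.Perm (Fin n))) ⊔ N) : Set (Equiv.Perm (Fin n))) := by
        rw [sup_comm, hsup]; trivial
      rw [Subgroup.mul_normal] at hg
      obtain ⟨b, hb, a, ha, rfl⟩ := hg
      refine ⟨⟨b, hb⟩, ?_⟩
      have h1 : (QuotientGroup.mk' N) (b * a) = (QuotientGroup.mk' N) b := by
        simp [QuotientGroup.mk'_apply, (QuotientGroup.eq_one_iff a).mpr ha]
      simpa using h1.symm
    have hQdvd : Nat.card (Equiv.Perm (Fin n) ⧸ N)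
        ∣ p ^ (Nat.card (Equiv.Perm (Fin n))).factorization p := by
      rw [← hPcard]
      exact Subgroup.card_dvd_of_surjective _ hsurj
    -- any element of order coprime to p lies in N
    have hmemN : ∀ g : Equiv.Perm (Fin n), Nat.Coprime (orderOf g) p → g ∈ N := by
      intro g hg
      have h1 : orderOf ((g : Equiv.Perm (Fin n) ⧸ N)) ∣ orderOf g :=
        orderOf_map_dvd (QuotientGroup.mk' N) g
      have h2 : orderOf ((g : Equiv.Perm (Fin n) ⧸ N))
          ∣ p ^ (Nat.card (Equiv.Perm (Fin n))).factorization p :=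
        dvd_trans (orderOf_dvd_natCard _) hQdvd
      have hcop : Nat.Coprime (orderOf ((g : Equiv.Perm (Fin n) ⧸ N)))
          (p ^ (Nat.card (Equiv.Perm (Fin n))).factorization p) :=
        Nat.Coprime.coprime_dvd_left h1 (hg.pow_right _)
      have : orderOf ((g : Equiv.Perm (Fin n) ⧸ N)) = 1 := hcop.eq_one_of_dvd h2
      rw [orderOf_eq_one_iff] at this
      exact (QuotientGroup.eq_one_iff g).mp this
    by_cases hp2 : p = 2
    · -- p = 2 : three-cycles lie in N, so A_n ≤ N, so index of N divides 2,
      -- but |P| = 2^v₂(n!) ≥ 8.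
      have hAle : alternatingGroup (Fin n) ≤ N := by
        rw [← Equiv.Perm.closure_three_cycles_eq_alternating, Subgroup.closure_le]
        intro g hg
        exact hmemN g (by
          rw [Equiv.Perm.IsThreeCycle.orderOf hg, hp2]; decide)
      have hidx : N.index ∣ (alternatingGroup (Fin n)).index :=
        Subgroup.index_dvd_of_le hAle
      have hnontriv : Nontrivial (Fin n) :=
        Fin.nontrivial_iff_two_le.mpr (by omega)
      have hAidx : (alternatingGroup (Fin n)).index = 2 := by
        have h1 : Nat.card (alternatingGroup (Fin n)) * (alternatingGroup (Fin n)).index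
            = Nat.card (Equiv.Perm (Fin n)) := Subgroup.card_mul_index _
        have h2 : 2 * Nat.card (alternatingGroup (Fin n)) = Nat.card (Equiv.Perm (Fin n)) := by
          simpa [Nat.card_eq_fintype_card] using @two_mul_card_alternatingGroup (Fin n) _ _ hnontriv
        have hpos : 0 < Nat.card (alternatingGroup (Fin n)) := Nat.card_pos
        rw [← h2] at h1
        exact Nat.eq_of_mul_eq_mul_left hpos (by rw [h1]; ring)
      -- P injects into the quotient
      have hinj : Function.Injective
          ((QuotientGroup.mk' N).comp (P : Subgroup (Equiv.Perm (Fin n))).subtype) := by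
        rw [← MonoidHom.ker_eq_bot_iff]
        rw [eq_bot_iff]
        rintro ⟨x, hxP⟩ hx
        have : x ∈ N := by
          simpa [MonoidHom.mem_ker, QuotientGroup.eq_one_iff] using hx
        have : x ∈ N ⊓ (P : Subgroup (Equiv.Perm (Fin n))) := ⟨this, hxP⟩
        rw [hinf] at this
        simpa [Subgroup.mem_bot] using this
      have hPdvd : Nat.card (P : Subgroup (Equiv.Perm (Fin n)))
          ∣ Nat.card (Equiv.Perm (Fin n) ⧸ N) :=
        Subgroup.card_dvd_of_injective _ hinj
      have hQidx : Nat.card (Equiv.Perm (Fin n) ⧸ N) = N.index := rfl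
      have h8 : (8 : ℕ) ∣ n ! := dvd_trans (by norm_num [Nat.factorial]) (Nat.factorial_dvd_factorial hn)
      have hv : 3 ≤ (n !).factorization p := by
        rw [hp2]
        exact (Nat.Prime.pow_dvd_iff_le_factorization Nat.prime_two
          (Nat.factorial_ne_zero n)).mp (by simpa using h8)
      have h8P : (8 : ℕ) ∣ Nat.card (P : Subgroup (Equiv.Perm (Fin n))) := by
        rw [hPcard, hcard, hp2]
        calc (8 : ℕ) = 2 ^ 3 := by norm_num
        _ ∣ 2 ^ (n !).factorization 2 := pow_dvd_pow 2 (by simpa [hp2] using hv)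
      have : (8 : ℕ) ∣ 2 := by
        refine dvd_trans h8P (dvd_trans hPdvd ?_)
        rw [hQidx, ← hAidx]
        exact hidx
      norm_num at this
    · -- p ≠ 2 : swaps lie in N, so N = ⊤, so P = ⊥, contradicting p ∣ |P|.
      have hNtop : N = ⊤ := by
        rw [eq_top_iff, ← Equiv.Perm.closure_isSwap, Subgroup.closure_le]
        rintro g ⟨x, y, hxy, rfl⟩
        refine hmemN _ ?_
        have ho : orderOf (Equiv.swap x y) = 2 := by
          refine orderOf_eq_prime ?_ ?_
          · rw [pow_two, Equiv.swap_mul_self]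
          · intro h
            refine hxy ?_
            have := Equiv.ext_iff.mp h x
            simp at this
            exact this.symm
        rw [ho]
        exact (Nat.coprime_primes Nat.prime_two hp).mpr (Ne.symm hp2)
      rw [hNtop, top_inf_eq] at hinf
      have : Nat.card (P : Subgroup (Equiv.Perm (Fin n))) = 1 := by
        rw [hinf]; simp
      rw [hPcard, hcard] at this
      have hv : 0 < (n !).factorization p :=
        Nat.Prime.factorization_pos_of_dvd hp (Nat.factorial_ne_zero n) hdvd
      have hpd : p ∣ p ^ ((n !).factorization p) := dvd_pow_self p hv.ne'
      rw [this] at hpd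
      have := Nat.eq_one_of_dvd_one hpd
      have := hp.one_lt
      omega
  · intro hgt
    have hndvd : ¬ p ∣ n ! := by
      rw [Nat.Prime.dvd_factorial hp]; omega
    obtain ⟨P⟩ := (inferInstance : Nonempty (Sylow p (Equiv.Perm (Fin n))))
    refine ⟨⊤, inferInstance, P, ?_, ?_⟩
    · have hPcard : Nat.card (P : Subgroup (Equiv.Perm (Fin n)))
          = p ^ (Nat.card (Equiv.Perm (Fin n))).factorization p :=
        P.card_eq_multiplicity
      have hfz : (Nat.card (Equiv.Perm (Fin n))).factorization p = 0 := by
        rw [hcard]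
        exact Nat.factorization_eq_zero_of_not_dvd hndvd
      rw [hfz, pow_zero] at hPcard
      have : (P : Subgroup (Equiv.Perm (Fin n))) = ⊥ := Subgroup.eq_bot_of_card_eq _ hPcard
      rw [this, top_inf_eq]
    · simp
end
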